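/- arXiv:2509.09017 — 3 statements merged into one kernel-verified Lean document; each statement's English description precedes it below -/
import Mathlib

section
/- The 10×10 matrix A_x of the first-order Kirchhoff–Love system (with entries (A_x)_{1,5} = -1/ρ, (A_x)_{2,7} = -1/ρ, (A_x)_{3,8} = -1/I, (A_x)_{4,10} = -1/I, (A_x)_{5,1} = -E/(1-ν²), (A_x)_{6,1} = -Eν/(1-ν²), (A_x)_{7,2} = -E/(4(1+ν)), (A_x)_{8,3} = -D, (A_x)_{9,3} = -Dν, (A_x)_{10,4} = -D(1-ν)/2, all other entries zero) has only real eigenvalues, provided ρ > 0, I > 0, E > 0, D > 0 and -1 < ν < 1. -/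
open Polynomial Matrix

lemma imzero_of_sq_pos (z : ℂ) (c : ℝ) (hc : 0 < c) (h : z^2 = (c:ℂ)) : z.im = 0 := by
  have h1 : (z^2).im = 0 := by rw [h]; simp
  have h2 : (z^2).re = c := by rw [h]; simp
  simp [pow_two, Complex.mul_im, Complex.mul_re] at h1 h2
  rcases mul_eq_zero.mp (by linarith : z.re * z.im = 0) with h | h
  · nlinarith
  · exact h

lemma key_pair (z x y a b : ℂ) (c : ℝ) (hx : x ≠ 0) (h1 : z*x = a*y) (h2 : z*y = b*x)
    (hab : a*b = (c:ℂ)) (hc : 0 < c) : z.im = 0 := by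
  have hmain : z^2 * x = (c:ℂ) * x := by
    rw [← hab]
    calc z^2*x = z*(z*x) := by ring
    _ = z*(a*y) := by rw [h1]
    _ = a*(z*y) := by ring
    _ = a*(b*x) := by rw [h2]
    _ = a*b*x := by ring
  exact imzero_of_sq_pos z c hc (mul_right_cancel₀ hx hmain)

set_option maxRecDepth 4000 in
theorem stmt0 (ρ I E D ν : ℝ) (hρ : 0 < ρ) (hI : 0 < I) (hE : 0 < E) (hD : 0 < D)
    (hν : -1 < ν ∧ ν < 1)
    (Ax : Matrix (Fin 10) (Fin 10) ℝ)
    (hAx : Ax = !![0, 0, 0, 0, -1/ρ, 0, 0, 0, 0, 0;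
    0, 0, 0, 0, 0, 0, -1/ρ, 0, 0, 0;
    0, 0, 0, 0, 0, 0, 0, -1/I, 0, 0;
    0, 0, 0, 0, 0, 0, 0, 0, 0, -1/I;
    -E/(1-ν^2), 0, 0, 0, 0, 0, 0, 0, 0, 0;
    -E*ν/(1-ν^2), 0, 0, 0, 0, 0, 0, 0, 0, 0;
    0, -E/(4*(1+ν)), 0, 0, 0, 0, 0, 0, 0, 0;
    0, 0, -D, 0, 0, 0, 0, 0, 0, 0;
    0, 0, -D*ν, 0, 0, 0, 0, 0, 0, 0;
    0, 0, 0, -D*(1-ν)/2, 0, 0, 0, 0, 0, 0]) :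
    ∀ z ∈ ((Ax.map (fun x => (x : ℂ))).charpoly).roots, z.im = 0 := by
  intro z hz
  set M := Ax.map (fun x => (x : ℂ)) with hM
  have hroot : M.charpoly.IsRoot z := isRoot_of_mem_roots hz
  have hdet : ((Matrix.scalar (Fin 10) z) - M).det = 0 := by
    have h2 : Polynomial.eval z M.charpoly = ((Matrix.scalar (Fin 10) z) - M).det := by
      rw [Matrix.charpoly, Polynomial.eval, ← Polynomial.coe_eval₂RingHom,
        RingHom.map_det]
      congr 1
      ext i j
      by_cases hij : i = j
      · subst hij
        simp [Matrix.charmatrix_apply_eq, Matrix.scalar_apply, Matrix.diagonal_apply_eq]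
      · simp [Matrix.charmatrix_apply_ne _ _ _ hij, Matrix.scalar_apply,
          Matrix.diagonal_apply_ne _ hij]
    rw [← h2]; exact hroot
  obtain ⟨v, hv0, hv⟩ := Matrix.exists_mulVec_eq_zero_iff.mpr hdet
  have hMv : ∀ i, z * v i = (M *ᵥ v) i := by
    intro i
    have h := congrFun hv i
    rw [Matrix.sub_mulVec] at h
    have hs : ((Matrix.scalar (Fin 10) z) *ᵥ v) i = z * v i := by
      simp [Matrix.scalar_apply, Matrix.mulVec_diagonal]
    simp only [Pi.sub_apply, hs, Pi.zero_apply, sub_eq_zero] at h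
    exact h
  have hMvi : ∀ i, (M *ᵥ v) i = ∑ j, ((Ax i j : ℂ)) * v j := by
    intro i
    simp [Matrix.mulVec, dotProduct, hM, Matrix.map_apply]
  have e0 : z * v ((0 : Fin 10)) = (((-1/ρ : ℝ) : ℝ) : ℂ) * v ((0 : Fin 6).succ.succ.succ.succ) := by
    rw [hMv ((0 : Fin 10)), hMvi, hAx]
    simp only [Fin.sum_univ_succ, Fin.sum_univ_zero, Matrix.of_apply, Matrix.cons_val',
      Matrix.cons_val_zero, Matrix.cons_val_succ, Matrix.cons_val_fin_one,
      Matrix.empty_val', Complex.ofReal_zero, zero_mul, add_zero, zero_add]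
  have e1 : z * v ((0 : Fin 9).succ) = (((-1/ρ : ℝ) : ℝ) : ℂ) * v ((0 : Fin 4).succ.succ.succ.succ.succ.succ) := by
    rw [hMv ((0 : Fin 9).succ), hMvi, hAx]
    simp only [Fin.sum_univ_succ, Fin.sum_univ_zero, Matrix.of_apply, Matrix.cons_val',
      Matrix.cons_val_zero, Matrix.cons_val_succ, Matrix.cons_val_fin_one,
      Matrix.empty_val', Complex.ofReal_zero, zero_mul, add_zero, zero_add]
  have e2 : z * v ((0 : Fin 8).succ.succ) = (((-1/I : ℝ) : ℝ) : ℂ) * v ((0 : Fin 3).succ.succ.succ.succ.succ.succ.succ) := by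
    rw [hMv ((0 : Fin 8).succ.succ), hMvi, hAx]
    simp only [Fin.sum_univ_succ, Fin.sum_univ_zero, Matrix.of_apply, Matrix.cons_val',
      Matrix.cons_val_zero, Matrix.cons_val_succ, Matrix.cons_val_fin_one,
      Matrix.empty_val', Complex.ofReal_zero, zero_mul, add_zero, zero_add]
  have e3 : z * v ((0 : Fin 7).succ.succ.succ) = (((-1/I : ℝ) : ℝ) : ℂ) * v ((0 : Fin 1).succ.succ.succ.succ.succ.succ.succ.succ.succ) := by
    rw [hMv ((0 : Fin 7).succ.succ.succ), hMvi, hAx]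
    simp only [Fin.sum_univ_succ, Fin.sum_univ_zero, Matrix.of_apply, Matrix.cons_val',
      Matrix.cons_val_zero, Matrix.cons_val_succ, Matrix.cons_val_fin_one,
      Matrix.empty_val', Complex.ofReal_zero, zero_mul, add_zero, zero_add]
  have e4 : z * v ((0 : Fin 6).succ.succ.succ.succ) = (((-E/(1-ν^2) : ℝ) : ℝ) : ℂ) * v ((0 : Fin 10)) := by
    rw [hMv ((0 : Fin 6).succ.succ.succ.succ), hMvi, hAx]
    simp only [Fin.sum_univ_succ, Fin.sum_univ_zero, Matrix.of_apply, Matrix.cons_val',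
      Matrix.cons_val_zero, Matrix.cons_val_succ, Matrix.cons_val_fin_one,
      Matrix.empty_val', Complex.ofReal_zero, zero_mul, add_zero, zero_add]
  have e5 : z * v ((0 : Fin 5).succ.succ.succ.succ.succ) = (((-E*ν/(1-ν^2) : ℝ) : ℝ) : ℂ) * v ((0 : Fin 10)) := by
    rw [hMv ((0 : Fin 5).succ.succ.succ.succ.succ), hMvi, hAx]
    simp only [Fin.sum_univ_succ, Fin.sum_univ_zero, Matrix.of_apply, Matrix.cons_val',
      Matrix.cons_val_zero, Matrix.cons_val_succ, Matrix.cons_val_fin_one,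
      Matrix.empty_val', Complex.ofReal_zero, zero_mul, add_zero, zero_add]
  have e6 : z * v ((0 : Fin 4).succ.succ.succ.succ.succ.succ) = (((-E/(4*(1+ν)) : ℝ) : ℝ) : ℂ) * v ((0 : Fin 9).succ) := by
    rw [hMv ((0 : Fin 4).succ.succ.succ.succ.succ.succ), hMvi, hAx]
    simp only [Fin.sum_univ_succ, Fin.sum_univ_zero, Matrix.of_apply, Matrix.cons_val',
      Matrix.cons_val_zero, Matrix.cons_val_succ, Matrix.cons_val_fin_one,
      Matrix.empty_val', Complex.ofReal_zero, zero_mul, add_zero, zero_add]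
  have e7 : z * v ((0 : Fin 3).succ.succ.succ.succ.succ.succ.succ) = (((-D : ℝ) : ℝ) : ℂ) * v ((0 : Fin 8).succ.succ) := by
    rw [hMv ((0 : Fin 3).succ.succ.succ.succ.succ.succ.succ), hMvi, hAx]
    simp only [Fin.sum_univ_succ, Fin.sum_univ_zero, Matrix.of_apply, Matrix.cons_val',
      Matrix.cons_val_zero, Matrix.cons_val_succ, Matrix.cons_val_fin_one,
      Matrix.empty_val', Complex.ofReal_zero, zero_mul, add_zero, zero_add]
  have e8 : z * v ((0 : Fin 2).succ.succ.succ.succ.succ.succ.succ.succ) = (((-D*ν : ℝ) : ℝ) : ℂ) * v ((0 : Fin 8).succ.succ) := by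
    rw [hMv ((0 : Fin 2).succ.succ.succ.succ.succ.succ.succ.succ), hMvi, hAx]
    simp only [Fin.sum_univ_succ, Fin.sum_univ_zero, Matrix.of_apply, Matrix.cons_val',
      Matrix.cons_val_zero, Matrix.cons_val_succ, Matrix.cons_val_fin_one,
      Matrix.empty_val', Complex.ofReal_zero, zero_mul, add_zero, zero_add]
  have e9 : z * v ((0 : Fin 1).succ.succ.succ.succ.succ.succ.succ.succ.succ) = (((-D*(1-ν)/2 : ℝ) : ℝ) : ℂ) * v ((0 : Fin 7).succ.succ.succ) := by
    rw [hMv ((0 : Fin 1).succ.succ.succ.succ.succ.succ.succ.succ.succ), hMvi, hAx]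
    simp only [Fin.sum_univ_succ, Fin.sum_univ_zero, Matrix.of_apply, Matrix.cons_val',
      Matrix.cons_val_zero, Matrix.cons_val_succ, Matrix.cons_val_fin_one,
      Matrix.empty_val', Complex.ofReal_zero, zero_mul, add_zero, zero_add]
  have h1ν : (0:ℝ) < 1 - ν^2 := by nlinarith [hν.1, hν.2]
  have h1ν' : (0:ℝ) < 1 + ν := by linarith [hν.1]
  have h1ν'' : (0:ℝ) < 1 - ν := by linarith [hν.2]
  by_cases hz0 : z = 0
  · simp [hz0]
  rcases ne_or_eq (v ((0 : Fin 10))) 0 with n0 | n0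
  · exact key_pair z (v ((0 : Fin 10))) (v ((0 : Fin 6).succ.succ.succ.succ)) _ _ (1/ρ * (E/(1-ν^2))) n0 e0 e4
      (by push_cast; ring) (by positivity)
  rcases ne_or_eq (v ((0 : Fin 9).succ)) 0 with n1 | n1
  · exact key_pair z (v ((0 : Fin 9).succ)) (v ((0 : Fin 4).succ.succ.succ.succ.succ.succ)) _ _ (1/ρ * (E/(4*(1+ν)))) n1 e1 e6
      (by push_cast; ring) (by positivity)
  rcases ne_or_eq (v ((0 : Fin 8).succ.succ)) 0 with n2 | n2
  · exact key_pair z (v ((0 : Fin 8).succ.succ)) (v ((0 : Fin 3).succ.succ.succ.succ.succ.succ.succ)) _ _ (1/I * D) n2 e2 e7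
      (by push_cast; ring) (by positivity)
  rcases ne_or_eq (v ((0 : Fin 7).succ.succ.succ)) 0 with n3 | n3
  · exact key_pair z (v ((0 : Fin 7).succ.succ.succ)) (v ((0 : Fin 1).succ.succ.succ.succ.succ.succ.succ.succ.succ)) _ _ (1/I * (D*(1-ν)/2)) n3 e3 e9
      (by push_cast; ring) (by positivity)
  exfalso
  apply hv0
  have z4 : v ((0 : Fin 6).succ.succ.succ.succ) = 0 := by
    rcases mul_eq_zero.mp (by rw [e4, n0, mul_zero] : z * v ((0 : Fin 6).succ.succ.succ.succ) = 0) with h | h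
    exacts [absurd h hz0, h]
  have z5 : v ((0 : Fin 5).succ.succ.succ.succ.succ) = 0 := by
    rcases mul_eq_zero.mp (by rw [e5, n0, mul_zero] : z * v ((0 : Fin 5).succ.succ.succ.succ.succ) = 0) with h | h
    exacts [absurd h hz0, h]
  have z6 : v ((0 : Fin 4).succ.succ.succ.succ.succ.succ) = 0 := by
    rcases mul_eq_zero.mp (by rw [e6, n1, mul_zero] : z * v ((0 : Fin 4).succ.succ.succ.succ.succ.succ) = 0) with h | h
    exacts [absurd h hz0, h]
  have z7 : v ((0 : Fin 3).succ.succ.succ.succ.succ.succ.succ) = 0 := by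
    rcases mul_eq_zero.mp (by rw [e7, n2, mul_zero] : z * v ((0 : Fin 3).succ.succ.succ.succ.succ.succ.succ) = 0) with h | h
    exacts [absurd h hz0, h]
  have z8 : v ((0 : Fin 2).succ.succ.succ.succ.succ.succ.succ.succ) = 0 := by
    rcases mul_eq_zero.mp (by rw [e8, n2, mul_zero] : z * v ((0 : Fin 2).succ.succ.succ.succ.succ.succ.succ.succ) = 0) with h | h
    exacts [absurd h hz0, h]
  have z9 : v ((0 : Fin 1).succ.succ.succ.succ.succ.succ.succ.succ.succ) = 0 := by
    rcases mul_eq_zero.mp (by rw [e9, n3, mul_zero] : z * v ((0 : Fin 1).succ.succ.succ.succ.succ.succ.succ.succ.succ) = 0) with h | h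
    exacts [absurd h hz0, h]
  funext j
  fin_cases j
  exacts [n0, n1, n2, n3, z4, z5, z6, z7, z8, z9]
end

section
/- The matrix A_x of the Kirchhoff–Love first-order system is diagonalizable over the reals: ℝ¹⁰ has a basis of eigenvectors of A_x. -/
/-!
The matrix pairs the coordinates (1,5), (2,7), (3,8), (4,10); columns 6 and 9 vanish. On each
pair it acts as `[[0, -p], [-q, 0]]` with `p q > 0`, so it has the real eigenvalues `±√(p q)`,
and the eigenvectors for these, together with `e₆` and `e₉`, are linearly independent: the
matrix of eigenvectors has an explicit inverse.
-/

open Matrix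

theorem Matrix.exists_eigenbasis_of_mul_eq_mul_diagonal {n R : Type*} [Fintype n] [DecidableEq n]
    [CommRing R] {A P Q : Matrix n n R} (d : n → R) (hQP : Q * P = 1)
    (hAP : A * P = P * diagonal d) :
    ∃ b : Module.Basis n R (n → R), ∀ i, ∃ μ : R, A *ᵥ b i = μ • b i := by
  let _ : Invertible P := invertibleOfLeftInverse P Q hQP
  refine ⟨(Pi.basisFun R n).map (P.toLinearEquiv' ‹_›), fun i => ⟨d i, ?_⟩⟩
  have hb : (Pi.basisFun R n).map (P.toLinearEquiv' ‹_›) i = P *ᵥ Pi.single i 1 := by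
    simp [Matrix.toLinearEquiv']
  rw [hb, mulVec_mulVec, hAP, ← mulVec_mulVec, diagonal_mulVec_single, mul_one,
    ← mulVec_smul, ← Pi.single_smul, smul_eq_mul, mul_one]

namespace KirchhoffLove

variable {K : Type*} [Field K]

def systemMatrix (p₁ p₂ p₃ p₄ q₁ q₂ q₃ q₄ r₁ r₃ : K) : Matrix (Fin 10) (Fin 10) K :=
  !![0, 0, 0, 0, -p₁, 0, 0, 0, 0, 0;
     0, 0, 0, 0, 0, 0, -p₂, 0, 0, 0;
     0, 0, 0, 0, 0, 0, 0, -p₃, 0, 0;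
     0, 0, 0, 0, 0, 0, 0, 0, 0, -p₄;
     -q₁, 0, 0, 0, 0, 0, 0, 0, 0, 0;
     -r₁, 0, 0, 0, 0, 0, 0, 0, 0, 0;
     0, -q₂, 0, 0, 0, 0, 0, 0, 0, 0;
     0, 0, -q₃, 0, 0, 0, 0, 0, 0, 0;
     0, 0, -r₃, 0, 0, 0, 0, 0, 0, 0;
     0, 0, 0, -q₄, 0, 0, 0, 0, 0, 0]

/-- For `s² = p q`, the first eight columns are, pair by pair, the eigenvectors
`eᵢ ∓ (s / p) eⱼ ∓ (r / s) eₗ` for the eigenvalues `±s`, where `r` is the entry coupling `eᵢ` to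
the kernel vector `eₗ` (if any); the last two columns are the kernel vectors `e₆`, `e₉`. -/
def eigenvectorMatrix (p₁ p₂ p₃ p₄ r₁ r₃ s₁ s₂ s₃ s₄ : K) : Matrix (Fin 10) (Fin 10) K :=
  !![1, 1, 0, 0, 0, 0, 0, 0, 0, 0;
     0, 0, 1, 1, 0, 0, 0, 0, 0, 0;
     0, 0, 0, 0, 1, 1, 0, 0, 0, 0;
     0, 0, 0, 0, 0, 0, 1, 1, 0, 0;
     -s₁ / p₁, s₁ / p₁, 0, 0, 0, 0, 0, 0, 0, 0;
     -r₁ / s₁, r₁ / s₁, 0, 0, 0, 0, 0, 0, 1, 0;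
     0, 0, -s₂ / p₂, s₂ / p₂, 0, 0, 0, 0, 0, 0;
     0, 0, 0, 0, -s₃ / p₃, s₃ / p₃, 0, 0, 0, 0;
     0, 0, 0, 0, -r₃ / s₃, r₃ / s₃, 0, 0, 0, 1;
     0, 0, 0, 0, 0, 0, -s₄ / p₄, s₄ / p₄, 0, 0]

def eigenvectorMatrixInv (p₁ p₂ p₃ p₄ r₁ r₃ s₁ s₂ s₃ s₄ : K) : Matrix (Fin 10) (Fin 10) K :=
  !![1 / 2, 0, 0, 0, -p₁ / (2 * s₁), 0, 0, 0, 0, 0;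
     1 / 2, 0, 0, 0, p₁ / (2 * s₁), 0, 0, 0, 0, 0;
     0, 1 / 2, 0, 0, 0, 0, -p₂ / (2 * s₂), 0, 0, 0;
     0, 1 / 2, 0, 0, 0, 0, p₂ / (2 * s₂), 0, 0, 0;
     0, 0, 1 / 2, 0, 0, 0, 0, -p₃ / (2 * s₃), 0, 0;
     0, 0, 1 / 2, 0, 0, 0, 0, p₃ / (2 * s₃), 0, 0;
     0, 0, 0, 1 / 2, 0, 0, 0, 0, 0, -p₄ / (2 * s₄);
     0, 0, 0, 1 / 2, 0, 0, 0, 0, 0, p₄ / (2 * s₄);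
     0, 0, 0, 0, -r₁ * p₁ / s₁ ^ 2, 1, 0, 0, 0, 0;
     0, 0, 0, 0, 0, 0, 0, -r₃ * p₃ / s₃ ^ 2, 1, 0]

variable {p₁ p₂ p₃ p₄ q₁ q₂ q₃ q₄ r₁ r₃ s₁ s₂ s₃ s₄ : K}

theorem eigenvectorMatrixInv_mul (h2 : (2 : K) ≠ 0) (hp₁ : p₁ ≠ 0) (hp₂ : p₂ ≠ 0)
    (hp₃ : p₃ ≠ 0) (hp₄ : p₄ ≠ 0) (hs₁ : s₁ ≠ 0) (hs₂ : s₂ ≠ 0) (hs₃ : s₃ ≠ 0) (hs₄ : s₄ ≠ 0) :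
    eigenvectorMatrixInv p₁ p₂ p₃ p₄ r₁ r₃ s₁ s₂ s₃ s₄ *
      eigenvectorMatrix p₁ p₂ p₃ p₄ r₁ r₃ s₁ s₂ s₃ s₄ = 1 := by
  rw [← Matrix.ext_iff]
  simp only [eigenvectorMatrixInv, eigenvectorMatrix, Fin.forall_fin_succ, mul_apply,
    Fin.sum_univ_succ, one_apply, of_apply, cons_val', cons_val_zero, cons_val_succ,
    cons_val_fin_one, empty_val', Finset.univ_eq_empty, Finset.sum_empty, IsEmpty.forall_iff]
  norm_num [Fin.ext_iff]
  repeat' apply And.intro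
  all_goals field_simp
  all_goals ring

def eigenvalues (s₁ s₂ s₃ s₄ : K) : Fin 10 → K := ![s₁, -s₁, s₂, -s₂, s₃, -s₃, s₄, -s₄, 0, 0]

theorem systemMatrix_mul_eigenvectorMatrix (hp₁ : p₁ ≠ 0) (hp₂ : p₂ ≠ 0) (hp₃ : p₃ ≠ 0)
    (hp₄ : p₄ ≠ 0) (hs₁ : s₁ ≠ 0) (hs₃ : s₃ ≠ 0) (hq₁ : p₁ * q₁ = s₁ ^ 2)
    (hq₂ : p₂ * q₂ = s₂ ^ 2) (hq₃ : p₃ * q₃ = s₃ ^ 2) (hq₄ : p₄ * q₄ = s₄ ^ 2) :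
    systemMatrix p₁ p₂ p₃ p₄ q₁ q₂ q₃ q₄ r₁ r₃ * eigenvectorMatrix p₁ p₂ p₃ p₄ r₁ r₃ s₁ s₂ s₃ s₄ =
      eigenvectorMatrix p₁ p₂ p₃ p₄ r₁ r₃ s₁ s₂ s₃ s₄ * diagonal (eigenvalues s₁ s₂ s₃ s₄) := by
  obtain rfl : q₁ = s₁ ^ 2 / p₁ := by rw [← hq₁]; field_simp
  obtain rfl : q₂ = s₂ ^ 2 / p₂ := by rw [← hq₂]; field_simp
  obtain rfl : q₃ = s₃ ^ 2 / p₃ := by rw [← hq₃]; field_simp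
  obtain rfl : q₄ = s₄ ^ 2 / p₄ := by rw [← hq₄]; field_simp
  rw [← Matrix.ext_iff]
  simp only [systemMatrix, eigenvectorMatrix, eigenvalues, Fin.forall_fin_succ, mul_apply,
    Fin.sum_univ_succ, diagonal_apply, of_apply, cons_val', cons_val_zero, cons_val_succ,
    cons_val_fin_one, empty_val', Finset.univ_eq_empty, Finset.sum_empty, IsEmpty.forall_iff]
  norm_num [Fin.ext_iff]
  repeat' apply And.intro
  all_goals field_simp

theorem exists_eigenbasis_systemMatrix (h2 : (2 : K) ≠ 0) (hs₁ : s₁ ≠ 0) (hs₂ : s₂ ≠ 0)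
    (hs₃ : s₃ ≠ 0) (hs₄ : s₄ ≠ 0) (hq₁ : p₁ * q₁ = s₁ ^ 2) (hq₂ : p₂ * q₂ = s₂ ^ 2)
    (hq₃ : p₃ * q₃ = s₃ ^ 2) (hq₄ : p₄ * q₄ = s₄ ^ 2) :
    ∃ b : Module.Basis (Fin 10) K (Fin 10 → K),
      ∀ i, ∃ μ : K, systemMatrix p₁ p₂ p₃ p₄ q₁ q₂ q₃ q₄ r₁ r₃ *ᵥ b i = μ • b i := by
  have hp₁ : p₁ ≠ 0 := left_ne_zero_of_mul (hq₁ ▸ pow_ne_zero 2 hs₁)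
  have hp₂ : p₂ ≠ 0 := left_ne_zero_of_mul (hq₂ ▸ pow_ne_zero 2 hs₂)
  have hp₃ : p₃ ≠ 0 := left_ne_zero_of_mul (hq₃ ▸ pow_ne_zero 2 hs₃)
  have hp₄ : p₄ ≠ 0 := left_ne_zero_of_mul (hq₄ ▸ pow_ne_zero 2 hs₄)
  exact exists_eigenbasis_of_mul_eq_mul_diagonal _
    (eigenvectorMatrixInv_mul (r₁ := r₁) (r₃ := r₃) h2 hp₁ hp₂ hp₃ hp₄ hs₁ hs₂ hs₃ hs₄)
    (systemMatrix_mul_eigenvectorMatrix hp₁ hp₂ hp₃ hp₄ hs₁ hs₃ hq₁ hq₂ hq₃ hq₄)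

theorem exists_eigenbasis_systemMatrix_of_pos {p₁ p₂ p₃ p₄ q₁ q₂ q₃ q₄ r₁ r₃ : ℝ}
    (h₁ : 0 < p₁ * q₁) (h₂ : 0 < p₂ * q₂) (h₃ : 0 < p₃ * q₃) (h₄ : 0 < p₄ * q₄) :
    ∃ b : Module.Basis (Fin 10) ℝ (Fin 10 → ℝ),
      ∀ i, ∃ μ : ℝ, systemMatrix p₁ p₂ p₃ p₄ q₁ q₂ q₃ q₄ r₁ r₃ *ᵥ b i = μ • b i :=
  exists_eigenbasis_systemMatrix two_ne_zero (Real.sqrt_ne_zero'.2 h₁) (Real.sqrt_ne_zero'.2 h₂)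
    (Real.sqrt_ne_zero'.2 h₃) (Real.sqrt_ne_zero'.2 h₄) (Real.sq_sqrt h₁.le).symm
    (Real.sq_sqrt h₂.le).symm (Real.sq_sqrt h₃.le).symm (Real.sq_sqrt h₄.le).symm

end KirchhoffLove

theorem stmt2 (ρ I E D ν : ℝ) (hρ : 0 < ρ) (hI : 0 < I) (hE : 0 < E) (hD : 0 < D)
    (hν : -1 < ν ∧ ν < 1)
    (Ax : Matrix (Fin 10) (Fin 10) ℝ)
    (hAx : Ax = !![0, 0, 0, 0, -1/ρ, 0, 0, 0, 0, 0;
    0, 0, 0, 0, 0, 0, -1/ρ, 0, 0, 0;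
    0, 0, 0, 0, 0, 0, 0, -1/I, 0, 0;
    0, 0, 0, 0, 0, 0, 0, 0, 0, -1/I;
    -E/(1-ν^2), 0, 0, 0, 0, 0, 0, 0, 0, 0;
    -E*ν/(1-ν^2), 0, 0, 0, 0, 0, 0, 0, 0, 0;
    0, -E/(4*(1+ν)), 0, 0, 0, 0, 0, 0, 0, 0;
    0, 0, -D, 0, 0, 0, 0, 0, 0, 0;
    0, 0, -D*ν, 0, 0, 0, 0, 0, 0, 0;
    0, 0, 0, -D*(1-ν)/2, 0, 0, 0, 0, 0, 0]) :
    ∃ b : Module.Basis (Fin 10) ℝ (Fin 10 → ℝ),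
      ∀ i, ∃ μ : ℝ, Ax.mulVec (b i) = μ • (b i) := by
  obtain ⟨hν₁, hν₂⟩ := hν
  have hν₁' : 0 < 1 + ν := by linarith
  have hν₂' : 0 < 1 - ν := by linarith
  have hν₃ : 0 < 1 - ν ^ 2 := by nlinarith
  have hAx' : Ax = KirchhoffLove.systemMatrix (1 / ρ) (1 / ρ) (1 / I) (1 / I)
      (E / (1 - ν ^ 2)) (E / (4 * (1 + ν))) D (D * (1 - ν) / 2) (E * ν / (1 - ν ^ 2)) (D * ν) := by
    simp only [hAx, KirchhoffLove.systemMatrix, neg_mul, neg_div]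
  rw [hAx']
  exact KirchhoffLove.exists_eigenbasis_systemMatrix_of_pos (by positivity) (by positivity)
    (by positivity) (by positivity)
end

section
/- The restriction of the Kirchhoff–Love system to the momentum variables (w_x, w_y, M_x, M_y, M_xy) in direction x yields a 5×5 matrix whose nonzero eigenvalues are ±√(D/I) and ±√(D(1-ν)/(2I)), with one zero eigenvalue. -/
open Polynomial

/- The coordinate blocks {0, 2, 3} and {1, 4} are invariant; the couplings 0 ↔ 2 and 1 ↔ 4 give
the two quadratic factors, and direction 3, which `s` feeds but which maps to 0, gives `X`. -/
theorem Matrix.charpoly_of_two_blocks {R : Type*} [CommRing R] (p q r s t : R) :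
    (!![0, 0, p, 0, 0;
        0, 0, 0, 0, q;
        r, 0, 0, 0, 0;
        s, 0, 0, 0, 0;
        0, t, 0, 0, 0] : Matrix (Fin 5) (Fin 5) R).charpoly =
      X * (X ^ 2 - C (p * r)) * (X ^ 2 - C (q * t)) := by
  simp [Matrix.charpoly, Matrix.det_succ_row_zero, Fin.sum_univ_succ, Fin.succAbove]
  ring

theorem Polynomial.roots_X_mul_X_sq_sub_C_sq_mul {R : Type*} [CommRing R] [IsDomain R] (a b : R) :
    (X * (X ^ 2 - C (a ^ 2)) * (X ^ 2 - C (b ^ 2))).roots = {a, -a, b, -b, 0} := by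
  have : X * (X ^ 2 - C (a ^ 2)) * (X ^ 2 - C (b ^ 2)) =
      (({a, -a, b, -b, 0} : Multiset R).map (fun r => X - C r)).prod := by
    simp only [Multiset.insert_eq_cons, Multiset.map_cons, Multiset.prod_cons,
      Multiset.map_singleton, Multiset.prod_singleton, map_neg, map_pow, map_zero]
    ring
  rw [this, roots_multiset_prod_X_sub_C]

theorem stmt13 (I D ν : ℝ) (hI : 0 < I) (hD : 0 < D) (hν : -1 < ν ∧ ν < 1)
    (Cx : Matrix (Fin 5) (Fin 5) ℝ)
    (hCx : Cx = !![0, 0, -1/I, 0, 0;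
    0, 0, 0, 0, -1/I;
    -D, 0, 0, 0, 0;
    -D*ν, 0, 0, 0, 0;
    0, -D*(1-ν)/2, 0, 0, 0])
    (c₃ c₄ : ℝ)
    (hc₃ : c₃ = Real.sqrt (D / I))
    (hc₄ : c₄ = Real.sqrt (D * (1 - ν) / (2 * I))) :
    ((Cx.map (fun x => (x : ℂ))).charpoly).roots =
      {(c₃ : ℂ), (-c₃ : ℂ), (c₄ : ℂ), (-c₄ : ℂ), 0} := by
  have h₃ : -1 / I * -D = c₃ ^ 2 := by
    rw [hc₃, Real.sq_sqrt (by positivity)]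
    ring
  have h₄ : -1 / I * (-D * (1 - ν) / 2) = c₄ ^ 2 := by
    rw [hc₄, Real.sq_sqrt (div_nonneg (mul_nonneg hD.le (by linarith [hν.2])) (by positivity))]
    ring
  have hmap : (Cx.map (fun x => (x : ℂ))).charpoly = Cx.charpoly.map Complex.ofRealHom :=
    Matrix.charpoly_map Cx Complex.ofRealHom
  rw [hmap, hCx, Matrix.charpoly_of_two_blocks, h₃, h₄]
  simp only [Polynomial.map_mul, Polynomial.map_sub, Polynomial.map_pow, map_X, map_C,
    Complex.ofRealHom_eq_coe, Complex.ofReal_pow]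
  exact roots_X_mul_X_sq_sub_C_sq_mul (c₃ : ℂ) c₄
end
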